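/- Let Q be the n×n symmetric matrix with entries Q_{ii} = β_i + 2α_i and Q_{ij} = α_i + α_j for i ≠ j, where α₁ ≤ α₂ ≤ ⋯ ≤ α_n and β_i ∈ ℝ. Then Q ∈ ℳ_n; consequently, for every λ ∈ ℝ, Q − λE (E the all-ones matrix) is copositive if and only if it is SPN. -/

import Mathlib

/-!
The off-diagonal entries `α i + α j` of `Q` are nondecreasing in `i` and `j`, and subtracting a
multiple of the all-ones matrix preserves this. So it suffices to show that a symmetric copositive
matrix `M` in `ℳ_n` is SPN, by induction on `n`.

If the last row of `M` is nonnegative, split the leading principal submatrix by induction and put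
the last row and column into the nonnegative part. Otherwise some `M (last) j < 0`, and
monotonicity forces every off-diagonal entry of the first row `m` to be negative; copositivity
then gives `M 0 0 > 0`. Removing the positive semidefinite matrix `(M 0 0)⁻¹ m mᵀ` leaves a matrix
supported on the trailing block (the Schur complement of `M 0 0`). That block is again in `ℳ`,
since products of negative nondecreasing numbers are nonincreasing, and copositive: for `y ≥ 0`
the vector `(t, y)`, with `t ≥ 0` chosen so that `mᵀ (t, y) = 0`, has the same value under `M`
and under the remainder.
-/

open Matrix

def Copositive {ι : Type*} [Fintype ι] (A : Matrix ι ι ℝ) : Prop :=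
  ∀ x : ι → ℝ, (∀ i, 0 ≤ x i) → 0 ≤ x ⬝ᵥ A.mulVec x

def SPN {ι : Type*} [Fintype ι] (A : Matrix ι ι ℝ) : Prop :=
  ∃ P N : Matrix ι ι ℝ, P.PosSemidef ∧ (∀ i j, 0 ≤ N i j) ∧ A = P + N

def Mn {n : ℕ} (A : Matrix (Fin n) (Fin n) ℝ) : Prop :=
  ∀ i j k l : Fin n, i ≤ k → j ≤ l → i ≠ j → k ≠ l → A i j ≤ A k l

section Cones

variable {ι κ : Type*} [Fintype ι] [Fintype κ]

theorem SPN.copositive {A : Matrix ι ι ℝ} (h : SPN A) : Copositive A := by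
  obtain ⟨P, N, hP, hN, rfl⟩ := h
  intro x hx
  rw [add_mulVec, dotProduct_add]
  refine add_nonneg (by simpa using hP.dotProduct_mulVec_nonneg x) ?_
  exact Finset.sum_nonneg fun i _ =>
    mul_nonneg (hx i) (Finset.sum_nonneg fun j _ => mul_nonneg (hN i j) (hx j))

theorem SPN.posSemidef_add {A P : Matrix ι ι ℝ} (hA : SPN A) (hP : P.PosSemidef) :
    SPN (P + A) := by
  obtain ⟨P', N, hP', hN, rfl⟩ := hA
  exact ⟨P + P', N, hP.add hP', hN, (add_assoc _ _ _).symm⟩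

theorem Copositive.submatrix {A : Matrix ι ι ℝ} (h : Copositive A) (e : κ → ι) :
    Copositive (A.submatrix e e) := by
  classical
  intro x hx
  set S : Matrix κ ι ℝ := (1 : Matrix ι ι ℝ).submatrix e id
  have hSA : A.submatrix e e = S * A * Sᵀ := by
    ext a b
    simp [S, mul_apply, one_apply]
  have hquad : x ⬝ᵥ (S * A * Sᵀ) *ᵥ x = (Sᵀ *ᵥ x) ⬝ᵥ A *ᵥ (Sᵀ *ᵥ x) := by
    rw [← mulVec_mulVec, ← mulVec_mulVec, dotProduct_mulVec, mulVec_transpose]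
  rw [hSA, hquad]
  refine h _ fun i => Finset.sum_nonneg fun a _ => ?_
  simp only [S, transpose_apply, submatrix_apply, id, one_apply]
  split_ifs <;> simp [hx a]

theorem Copositive.diag_nonneg {A : Matrix ι ι ℝ} (h : Copositive A) (i : ι) :
    0 ≤ A i i := by
  simpa [dotProduct, mulVec] using h.submatrix (fun _ : Unit => i) 1 fun _ => zero_le_one

theorem Copositive.add_transpose_nonneg_of_diag_eq_zero {A : Matrix ι ι ℝ} (h : Copositive A)
    {i : ι} (hi : A i i = 0) (j : ι) : 0 ≤ A i j + A j i := by
  have key (t : ℝ) (ht : 0 ≤ t) : 0 ≤ t * (A i j + A j i) + A j j := by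
    have := h.submatrix ![i, j] ![t, 1] (by simp [Fin.forall_fin_two, ht])
    simp [dotProduct, mulVec, Fin.sum_univ_two, hi] at this
    linarith
  by_contra! hneg
  have hjj := h.diag_nonneg j
  have hcancel : (A j j + 1) / -(A i j + A j i) * (A i j + A j i) = -(A j j + 1) := by
    field_simp [hneg.ne]
  have ht : 0 ≤ (A j j + 1) / -(A i j + A j i) := div_nonneg (by linarith) (by linarith)
  linarith [key _ ht]

theorem SPN.of_submatrix {A : Matrix ι ι ℝ} {e : κ → ι} (he : e.Injective)
    (h : SPN (A.submatrix e e))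
    (hout : ∀ i j, i ∉ Set.range e ∨ j ∉ Set.range e → 0 ≤ A i j) : SPN A := by
  classical
  obtain ⟨P, N, hP, hN, hPN⟩ := h
  -- `Sᵀ * P * S` is `P` transported to `range e × range e` and extended by zero
  set S : Matrix κ ι ℝ := (1 : Matrix ι ι ℝ).submatrix e id
  refine ⟨Sᵀ * P * S, A - Sᵀ * P * S, by simpa using hP.conjTranspose_mul_mul_same S,
    fun i j => ?_, (add_sub_cancel _ _).symm⟩
  by_cases hij : i ∈ Set.range e ∧ j ∈ Set.range e
  · obtain ⟨⟨a, rfl⟩, ⟨b, rfl⟩⟩ := hij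
    have hab : A (e a) (e b) = P a b + N a b := congrFun (congrFun hPN a) b
    simp [S, mul_apply, one_apply, he.eq_iff, hab, hN a b]
  · have hout' : i ∉ Set.range e ∨ j ∉ Set.range e := not_and_or.1 hij
    have hzero : (Sᵀ * P * S) i j = 0 := by
      simp only [S, mul_apply, transpose_apply, submatrix_apply, one_apply, id]
      rcases hout' with h | h <;> simp only [Set.mem_range, not_exists] at h <;> simp [h]
    simpa [hzero] using hout i j hout'

end Cones

section

variable {n : ℕ}

theorem Mn.submatrix {m : ℕ} {A : Matrix (Fin n) (Fin n) ℝ} (hA : Mn A) {e : Fin m → Fin n}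
    (he : StrictMono e) : Mn (A.submatrix e e) :=
  fun _ _ _ _ hik hjl hij hkl =>
    hA _ _ _ _ (he.monotone hik) (he.monotone hjl) (he.injective.ne hij) (he.injective.ne hkl)

theorem Mn.sub_smul_ones {A : Matrix (Fin n) (Fin n) ℝ} (hA : Mn A) (c : ℝ) :
    Mn (A - c • of fun _ _ => (1 : ℝ)) :=
  fun i j k l hik hjl hij hkl => by simpa using hA i j k l hik hjl hij hkl

theorem dotProduct_mulVec_eq_tail {R : Matrix (Fin (n + 1)) (Fin (n + 1)) ℝ}
    (hrow : ∀ j, R 0 j = 0) (hcol : ∀ i, R i 0 = 0) (x : Fin (n + 1) → ℝ) :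
    x ⬝ᵥ R *ᵥ x = Fin.tail x ⬝ᵥ R.submatrix Fin.succ Fin.succ *ᵥ Fin.tail x := by
  simp [dotProduct, mulVec, Fin.sum_univ_succ, hrow, hcol, Fin.tail]

/-- Its submatrix on `Fin.succ` is the Schur complement of the pivot `M 0 0`. -/
noncomputable def pivotResidual (M : Matrix (Fin (n + 1)) (Fin (n + 1)) ℝ) :
    Matrix (Fin (n + 1)) (Fin (n + 1)) ℝ :=
  M - (M 0 0)⁻¹ • vecMulVec (M 0) (M 0)

variable {M : Matrix (Fin (n + 1)) (Fin (n + 1)) ℝ}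

theorem pivotResidual_apply (i j : Fin (n + 1)) :
    pivotResidual M i j = M i j - (M 0 0)⁻¹ * (M 0 i * M 0 j) := rfl

theorem pivotResidual_zero_left (hc : M 0 0 ≠ 0) (j : Fin (n + 1)) :
    pivotResidual M 0 j = 0 := by
  rw [pivotResidual_apply, inv_mul_cancel_left₀ hc, sub_self]

theorem Matrix.IsSymm.pivotResidual (hM : M.IsSymm) : (pivotResidual M).IsSymm :=
  hM.sub (IsSymm.smul (transpose_vecMulVec _ _) _)

theorem pivotResidual_zero_right (hM : M.IsSymm) (hc : M 0 0 ≠ 0) (i : Fin (n + 1)) :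
    pivotResidual M i 0 = 0 := by
  rw [hM.pivotResidual.apply, pivotResidual_zero_left hc]

theorem dotProduct_pivotResidual_mulVec (x : Fin (n + 1) → ℝ) :
    x ⬝ᵥ pivotResidual M *ᵥ x = x ⬝ᵥ M *ᵥ x - (M 0 0)⁻¹ * (M 0 ⬝ᵥ x) ^ 2 := by
  rw [pivotResidual, sub_mulVec, dotProduct_sub, smul_mulVec, vecMulVec_mulVec]
  simp [dotProduct_comm x, sq, mul_comm]

theorem Copositive.pivotResidual_submatrix (hM : M.IsSymm) (hcop : Copositive M)
    (hc : 0 < M 0 0) (hrow : ∀ j : Fin n, M 0 j.succ ≤ 0) :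
    Copositive ((pivotResidual M).submatrix Fin.succ Fin.succ) := by
  intro y hy
  set t := -(Fin.tail (M 0) ⬝ᵥ y) / M 0 0
  have ht : 0 ≤ t := div_nonneg (neg_nonneg.2 (Finset.sum_nonpos fun j _ =>
    mul_nonpos_of_nonpos_of_nonneg (hrow j) (hy j))) hc.le
  have horth : M 0 ⬝ᵥ Fin.cons t y = 0 := by
    have hsplit : M 0 ⬝ᵥ Fin.cons t y = M 0 0 * t + Fin.tail (M 0) ⬝ᵥ y := by
      simp [dotProduct, Fin.sum_univ_succ, Fin.tail]
    rw [hsplit, mul_div_cancel₀ _ hc.ne', neg_add_cancel]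
  have hres := dotProduct_mulVec_eq_tail (pivotResidual_zero_left hc.ne')
    (pivotResidual_zero_right hM hc.ne') (Fin.cons t y)
  rw [Fin.tail_cons] at hres
  rw [← hres, dotProduct_pivotResidual_mulVec, horth]
  simpa using hcop _ (Fin.forall_fin_succ.2 ⟨by simpa using ht, by simpa using hy⟩)

theorem Mn.pivotResidual_submatrix (hMn : Mn M) (hc : 0 < M 0 0)
    (hrow : ∀ j : Fin n, M 0 j.succ ≤ 0) :
    Mn ((pivotResidual M).submatrix Fin.succ Fin.succ) := by
  intro i j k l hik hjl hij hkl
  have hw {a b : Fin n} (hab : a ≤ b) : M 0 a.succ ≤ M 0 b.succ :=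
    hMn _ _ _ _ le_rfl (Fin.succ_le_succ_iff.2 hab) (Fin.succ_ne_zero _).symm
      (Fin.succ_ne_zero _).symm
  have hprod : M 0 k.succ * M 0 l.succ ≤ M 0 i.succ * M 0 j.succ := by
    nlinarith [hw hik, hw hjl, hrow k, hrow l]
  have hM' := hMn.submatrix Fin.strictMono_succ i j k l hik hjl hij hkl
  simp only [submatrix_apply, pivotResidual_apply] at hM' ⊢
  have := mul_le_mul_of_nonneg_left hprod (inv_nonneg.2 hc.le)
  linarith

theorem SPN.of_pivotResidual_submatrix (hM : M.IsSymm) (hc : 0 < M 0 0)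
    (h : SPN ((pivotResidual M).submatrix Fin.succ Fin.succ)) : SPN M := by
  have hR : SPN (pivotResidual M) := by
    refine h.of_submatrix (Fin.succ_injective _) fun i j hij => ?_
    rcases hij with hi | hj
    · rw [Fin.range_succ, Set.mem_compl_iff, not_not] at hi
      rw [hi, pivotResidual_zero_left hc.ne']
    · rw [Fin.range_succ, Set.mem_compl_iff, not_not] at hj
      rw [hj, pivotResidual_zero_right hM hc.ne']
  have hP : ((M 0 0)⁻¹ • vecMulVec (M 0) (M 0)).PosSemidef := by
    simpa using (posSemidef_vecMulVec_self_star (M 0)).smul (inv_nonneg.2 hc.le)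
  simpa [pivotResidual] using hR.posSemidef_add hP

theorem SPN.of_submatrix_castSucc (hM : M.IsSymm) (hcop : Copositive M)
    (hrow : ∀ j : Fin n, 0 ≤ M (Fin.last n) j.castSucc)
    (h : SPN (M.submatrix Fin.castSucc Fin.castSucc)) : SPN M := by
  refine h.of_submatrix (Fin.castSucc_injective _) fun i j hij => ?_
  rcases Fin.eq_castSucc_or_eq_last i with ⟨a, rfl⟩ | rfl <;>
    rcases Fin.eq_castSucc_or_eq_last j with ⟨b, rfl⟩ | rfl
  · simp at hij
  · rw [← hM.apply]
    exact hrow a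
  · exact hrow b
  · exact hcop.diag_nonneg _

end

theorem Mn.spn_of_copositive :
    ∀ {n : ℕ} {M : Matrix (Fin n) (Fin n) ℝ}, M.IsSymm → Mn M → Copositive M → SPN M
  | 0, _, _, _, _ => ⟨0, 0, .zero, fun i => i.elim0, Subsingleton.elim _ _⟩
  | n + 1, M, hM, hMn, hcop => by
    by_cases hlast : ∀ j : Fin n, 0 ≤ M (Fin.last n) j.castSucc
    · exact .of_submatrix_castSucc hM hcop hlast <| spn_of_copositive (hM.submatrix _)
        (hMn.submatrix Fin.strictMono_castSucc) (hcop.submatrix _)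
    obtain ⟨j₀, hj₀⟩ : ∃ j₀ : Fin n, M (Fin.last n) j₀.castSucc < 0 := by simpa using hlast
    have hneg (j : Fin n) : M 0 j.succ < 0 := by
      refine lt_of_le_of_lt (hMn _ _ _ _ (Fin.zero_le _) (Fin.le_last _)
        (Fin.succ_ne_zero j).symm (Fin.castSucc_lt_last j₀).ne) ?_
      rwa [hM.apply]
    have hc : 0 < M 0 0 := by
      refine (hcop.diag_nonneg 0).lt_of_ne fun h => ?_
      have := hcop.add_transpose_nonneg_of_diag_eq_zero h.symm j₀.succ
      rw [hM.apply 0] at this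
      linarith [hneg j₀]
    have hrow (j : Fin n) : M 0 j.succ ≤ 0 := (hneg j).le
    exact .of_pivotResidual_submatrix hM hc <| spn_of_copositive (hM.pivotResidual.submatrix _)
      (hMn.pivotResidual_submatrix hc hrow) (hcop.pivotResidual_submatrix hM hc hrow)

theorem stmt_19 {n : ℕ} (α β : Fin n → ℝ) (hα : ∀ i j : Fin n, i ≤ j → α i ≤ α j)
    (Q : Matrix (Fin n) (Fin n) ℝ)
    (hQ : Q = fun i j => if i = j then β i + 2 * α i else α i + α j) :
    Mn Q ∧ ∀ l : ℝ,
      Copositive (Q - l • (Matrix.of fun _ _ => (1 : ℝ))) ↔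
        SPN (Q - l • (Matrix.of fun _ _ => (1 : ℝ))) := by
  have hMn : Mn Q := fun i j k l hik hjl hij hkl => by
    simpa [hQ, hij, hkl] using add_le_add (hα i k hik) (hα j l hjl)
  have hsymm : Q.IsSymm := IsSymm.ext fun i j => by
    by_cases h : i = j
    · rw [h]
    · simp [hQ, h, Ne.symm h, add_comm]
  have hones : (of fun _ _ => 1 : Matrix (Fin n) (Fin n) ℝ).IsSymm := IsSymm.ext fun _ _ => rfl
  refine ⟨hMn, fun l => ⟨fun hcop => ?_, SPN.copositive⟩⟩
  exact (hMn.sub_smul_ones l).spn_of_copositive (hsymm.sub (hones.smul l)) hcop
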